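/- Let A be a finite abelian group, p a prime not dividing |A|, and s an even positive integer. If a ∈ A satisfies S(a) = S(-p^{s/2}·a) (a class of type II′), then the cardinality ν of S(a) is odd; moreover -a = p^{sν/2}·a and -p^{s/2}·a = p^{s(ν+1)/2}·a. -/

import Mathlib

/-!
Write `t = s/2` and `g b = p^t • (-b)`. Then `g ∘ g` is multiplication by `p^s`, so `S(b)` is the
orbit of `b` under `g^[2]`, and the hypothesis `a ∈ S(g a)` says that `a` is a periodic point of `g`
of odd period `2i + 1`. Hence the minimal period `ν` of `a` under `g` is odd, so it is also the
minimal period under `g^[2]`, i.e. `ν = |S(a)|`; and `g^[ν] a = a` reads `p^{tν} • (-a) = a`.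
-/

open Function

namespace Function

variable {α : Type*} {f : α → α} {x : α}

theorem ncard_range_iterate_eq_minimalPeriod (hx : x ∈ periodicPts f) :
    (Set.range fun n => f^[n] x).ncard = minimalPeriod f x := by
  have hrange :
      (Set.range fun n => f^[n] x) = (fun n => f^[n] x) '' Set.Iio (minimalPeriod f x) := by
    refine (Set.image_subset_range _ _).antisymm' ?_
    rintro _ ⟨n, rfl⟩
    exact ⟨n % minimalPeriod f x, Nat.mod_lt _ (minimalPeriod_pos_of_mem_periodicPts hx),
      iterate_mod_minimalPeriod_eq⟩
  rw [hrange, iterate_injOn_Iio_minimalPeriod.ncard_image, Set.ncard_Iio_nat]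

theorem minimalPeriod_iterate_two_of_odd (h : Odd (minimalPeriod f x)) :
    minimalPeriod f^[2] x = minimalPeriod f x := by
  rw [minimalPeriod_iterate_eq_div_gcd two_ne_zero, Nat.coprime_two_right.mpr h, Nat.div_one]

end Function

section NegSMul

variable {A : Type*} [AddCommGroup A]

theorem iterate_two_smul_neg_apply (k : ℕ) (b : A) :
    (fun c : A => k • -c)^[2] b = k ^ 2 • b := by
  simp [pow_two, mul_smul]

theorem iterate_smul_neg_apply_of_odd (k : ℕ) {n : ℕ} (hn : Odd n) (b : A) :
    (fun c : A => k • -c)^[n] b = k ^ n • -b := by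
  have hcomm : Function.Commute (fun c : A => k • c) Neg.neg := fun c => smul_neg k c
  rw [show (fun c : A => k • -c) = (fun c => k • c) ∘ Neg.neg from rfl, hcomm.comp_iterate,
    neg_involutive.iterate_odd hn, comp_apply, smul_iterate_apply]

end NegSMul

theorem cyclotomic_class_typeII'_general (A : Type*) [AddCommGroup A]
    (p : ℕ)
    (s : ℕ) (hseven : Even s) (a : A)
    (hSa : {b : A | ∃ i : ℕ, b = p ^ (s * i) • a} =
           {b : A | ∃ i : ℕ, b = p ^ (s * i) • (p ^ (s / 2) • (-a))}) :
    Odd (Set.ncard {b : A | ∃ i : ℕ, b = p ^ (s * i) • a}) ∧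
    ∀ ν : ℕ, Set.ncard {b : A | ∃ i : ℕ, b = p ^ (s * i) • a} = ν →
      (-a = p ^ (s / 2 * ν) • a ∧
       p ^ (s / 2) • (-a) = p ^ (s / 2 * (ν + 1)) • a) := by
  set g : A → A := fun b => p ^ (s / 2) • -b
  have hclass (b : A) :
      {c : A | ∃ i : ℕ, c = p ^ (s * i) • b} = Set.range fun i => (g^[2])^[i] b := by
    have hsq : g^[2] = fun c => p ^ s • c := funext fun c => by
      rw [iterate_two_smul_neg_apply, ← pow_mul, Nat.div_two_mul_two_of_even hseven]
    ext c
    simp only [hsq, smul_iterate_apply, ← pow_mul, Set.mem_ofPred_eq, Set.mem_range, eq_comm]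
  obtain ⟨i, hi⟩ : a ∈ Set.range fun i => (g^[2])^[i] (g a) := by
    rw [← hclass, ← hSa]
    exact ⟨0, by simp⟩
  have hper : IsPeriodicPt g (2 * i + 1) a := by
    rw [IsPeriodicPt, IsFixedPt, iterate_succ_apply, iterate_mul]
    exact hi
  have hodd : Odd (minimalPeriod g a) := (odd_two_mul_add_one i).of_dvd_nat hper.minimalPeriod_dvd
  have hcard : Set.ncard {b : A | ∃ i : ℕ, b = p ^ (s * i) • a} = minimalPeriod g a := by
    have ha : a ∈ periodicPts g^[2] := mk_mem_periodicPts (by omega) (hper.iterate 2)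
    rw [hclass, ncard_range_iterate_eq_minimalPeriod ha, minimalPeriod_iterate_two_of_odd hodd]
  have hneg : -a = p ^ (s / 2 * minimalPeriod g a) • a := by
    have hfix : g^[minimalPeriod g a] a = a := isPeriodicPt_minimalPeriod g a
    rw [iterate_smul_neg_apply_of_odd _ hodd, smul_neg] at hfix
    rw [pow_mul, neg_eq_iff_eq_neg]
    exact hfix.symm
  refine ⟨hcard ▸ hodd, fun ν hν => ?_⟩
  rw [← hν, hcard]
  refine ⟨hneg, ?_⟩
  rw [hneg, smul_smul, ← pow_add, mul_add_one, add_comm]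

/-- If `s` is even and the `p^s`-cyclotomic class of `a` satisfies
`S(a) = S(-p^{s/2}·a)` (type II′), then its cardinality `ν` is odd, and
moreover `-a = p^{sν/2}·a` and `-p^{s/2}·a = p^{s(ν+1)/2}·a`. -/
theorem cyclotomic_class_typeII' (A : Type*) [AddCommGroup A] [Fintype A]
    (p : ℕ) (hp : p.Prime) (hpA : ¬ p ∣ Fintype.card A)
    (s : ℕ) (hs : 1 ≤ s) (hseven : Even s) (a : A)
    (hSa : {b : A | ∃ i : ℕ, b = p ^ (s * i) • a} =
           {b : A | ∃ i : ℕ, b = p ^ (s * i) • (p ^ (s / 2) • (-a))}) :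
    Odd (Set.ncard {b : A | ∃ i : ℕ, b = p ^ (s * i) • a}) ∧
    ∀ ν : ℕ, Set.ncard {b : A | ∃ i : ℕ, b = p ^ (s * i) • a} = ν →
      (-a = p ^ (s / 2 * ν) • a ∧
       p ^ (s / 2) • (-a) = p ^ (s / 2 * (ν + 1)) • a) :=
  cyclotomic_class_typeII'_general A p s hseven a hSa
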